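/- arXiv:2107.09459 — 3 statements merged into one kernel-verified Lean document; each statement's English description precedes it below -/
import Mathlib

section
/- For nonnegative n×n matrices K₁,…,K_m and t ≥ 1, r(K₁^(t) ⋯ K_m^(t)) ≤ r(K₁ ⋯ K_m)^t, where A^(t) is the entrywise t-th power and r is the spectral radius. -/
/-! For `t ≥ 1` the map `x ↦ x ^ t` is multiplicative and superadditive on `[0, ∞)`, so the pairs
`(Q, P)` of nonnegative matrices with `Q ≤ P^(t)` entrywise form a submonoid. It contains
`(Q, P) := (K₁^(t) ⋯ K_m^(t), K₁ ⋯ K_m)` and its powers `(Q ^ k, P ^ k)`. Superadditivity once more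
gives `‖Q ^ k‖ ≤ ‖P ^ k‖ ^ t` for the maximum-row-sum norm, and Gelfand's formula
`r(A) = lim ‖A ^ k‖ ^ (1 / k)` turns this into `r(Q) ≤ r(P) ^ t`. -/

open scoped ENNReal
open Finset
noncomputable def specRad {n : ℕ} (A : Matrix (Fin n) (Fin n) ℝ) : ℝ≥0∞ :=
  spectralRadius ℂ (A.map (algebraMap ℝ ℂ))
noncomputable def opNorm {n : ℕ} (A : Matrix (Fin n) (Fin n) ℝ) : ℝ :=
  ‖Matrix.toEuclideanCLM (𝕜 := ℝ) A‖

open scoped NNReal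

theorem Real.sum_rpow_le_rpow_sum {ι : Type*} (s : Finset ι) {f : ι → ℝ}
    (hf : ∀ i ∈ s, 0 ≤ f i) {p : ℝ} (hp : 1 ≤ p) :
    ∑ i ∈ s, f i ^ p ≤ (∑ i ∈ s, f i) ^ p := by
  classical
  induction s using Finset.induction_on with
  | empty => simp [Real.zero_rpow (by linarith : p ≠ 0)]
  | insert a s ha ih =>
    have hs : ∀ i ∈ s, 0 ≤ f i := fun i hi => hf i (mem_insert_of_mem hi)
    rw [sum_insert ha, sum_insert ha]
    exact (add_le_add_right (ih hs) _).trans <|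
      Real.add_rpow_le_rpow_add (hf a (mem_insert_self a s)) (sum_nonneg hs) hp

theorem NNReal.sum_rpow_le_rpow_sum {ι : Type*} (s : Finset ι) (f : ι → ℝ≥0) {p : ℝ}
    (hp : 1 ≤ p) : ∑ i ∈ s, f i ^ p ≤ (∑ i ∈ s, f i) ^ p := by
  rw [← NNReal.coe_le_coe]
  push_cast
  exact Real.sum_rpow_le_rpow_sum s (fun i _ => (f i).2) hp

theorem spectralRadius_le_rpow_of_nnnorm_pow_le {A : Type*} [NormedRing A] [NormedAlgebra ℂ A]
    [CompleteSpace A] {a b : A} {t : ℝ} (ht : 0 ≤ t) (h : ∀ k : ℕ, ‖a ^ k‖₊ ≤ ‖b ^ k‖₊ ^ t) :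
    spectralRadius ℂ a ≤ spectralRadius ℂ b ^ t := by
  have hb := (ENNReal.continuous_rpow_const (y := t)).tendsto _ |>.comp
    (spectrum.pow_nnnorm_pow_one_div_tendsto_nhds_spectralRadius b)
  refine le_of_tendsto_of_tendsto'
    (spectrum.pow_nnnorm_pow_one_div_tendsto_nhds_spectralRadius a) hb fun k => ?_
  calc (‖a ^ k‖₊ : ℝ≥0∞) ^ (1 / (k : ℝ))
      ≤ ((‖b ^ k‖₊ ^ t : ℝ≥0) : ℝ≥0∞) ^ (1 / (k : ℝ)) :=
        ENNReal.rpow_le_rpow (by exact_mod_cast h k) (by positivity)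
    _ = ((‖b ^ k‖₊ : ℝ≥0∞) ^ (1 / (k : ℝ))) ^ t := by
        rw [ENNReal.coe_rpow_of_nonneg _ ht, ← ENNReal.rpow_mul, ← ENNReal.rpow_mul, mul_comm]

namespace Matrix

theorem mul_apply_le_rpow {l m n : Type*} [Fintype m] {t : ℝ} (ht : 1 ≤ t)
    {Q P : Matrix l m ℝ} {Q' P' : Matrix m n ℝ}
    (hQ : ∀ i j, 0 ≤ Q i j ∧ 0 ≤ P i j ∧ Q i j ≤ P i j ^ t)
    (hQ' : ∀ i j, 0 ≤ Q' i j ∧ 0 ≤ P' i j ∧ Q' i j ≤ P' i j ^ t) (i : l) (j : n) :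
    (Q * Q') i j ≤ (P * P') i j ^ t := by
  rw [mul_apply, mul_apply]
  calc ∑ k, Q i k * Q' k j ≤ ∑ k, (P i k * P' k j) ^ t := by
        refine sum_le_sum fun k _ => ?_
        obtain ⟨-, hP, hQP⟩ := hQ i k
        obtain ⟨hQ'0, hP', hQP'⟩ := hQ' k j
        rw [Real.mul_rpow hP hP']
        exact mul_le_mul hQP hQP' hQ'0 (Real.rpow_nonneg hP t)
    _ ≤ (∑ k, P i k * P' k j) ^ t :=
        Real.sum_rpow_le_rpow_sum _ (fun k _ => mul_nonneg (hQ i k).2.1 (hQ' k j).2.1) ht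

def rpowDominatedPairs (ι : Type*) [Fintype ι] [DecidableEq ι] (t : ℝ) (ht : 1 ≤ t) :
    Submonoid (Matrix ι ι ℝ × Matrix ι ι ℝ) where
  carrier := {QP | ∀ i j, 0 ≤ QP.1 i j ∧ 0 ≤ QP.2 i j ∧ QP.1 i j ≤ QP.2 i j ^ t}
  one_mem' i j := by
    rcases eq_or_ne i j with rfl | hij
    · simp
    · simp [one_apply_ne hij, Real.zero_rpow (by linarith : t ≠ 0)]
  mul_mem' {QP QP'} h h' i j := by
    have hmul {A B : Matrix ι ι ℝ} (hA : ∀ i j, 0 ≤ A i j) (hB : ∀ i j, 0 ≤ B i j) :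
        0 ≤ (A * B) i j :=
      sum_nonneg fun k _ => mul_nonneg (hA i k) (hB k j)
    exact ⟨hmul (fun i j => (h i j).1) (fun i j => (h' i j).1),
      hmul (fun i j => (h i j).2.1) (fun i j => (h' i j).2.1), mul_apply_le_rpow ht h h' i j⟩

theorem list_prod_rpow_mem_rpowDominatedPairs {ι : Type*} [Fintype ι] [DecidableEq ι] {t : ℝ}
    (ht : 1 ≤ t) (L : List (Matrix ι ι ℝ)) (hL : ∀ A ∈ L, ∀ i j, 0 ≤ A i j) :
    ((L.map fun A => of fun i j => A i j ^ t).prod, L.prod) ∈ rpowDominatedPairs ι t ht := by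
  induction L with
  | nil => exact Submonoid.one_mem _
  | cons A L ih =>
    have hA : (of fun i j => A i j ^ t, A) ∈ rpowDominatedPairs ι t ht := fun i j =>
      ⟨Real.rpow_nonneg (hL A List.mem_cons_self i j) t, hL A List.mem_cons_self i j, le_rfl⟩
    exact Submonoid.mul_mem _ hA (ih fun B hB => hL B (List.mem_cons_of_mem A hB))

section LinftyOpNorm

attribute [local instance] Matrix.linftyOpNormedAddCommGroup

variable {m n : Type*} [Fintype m] [Fintype n]

theorem linfty_opNNNorm_map_of_nnnorm_eq {α β : Type*} [NormedAddCommGroup α]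
    [NormedAddCommGroup β] {f : α → β} (hf : ∀ x, ‖f x‖₊ = ‖x‖₊) (A : Matrix m n α) :
    ‖A.map f‖₊ = ‖A‖₊ := by
  simp [linfty_opNNNorm_def, hf]

theorem linfty_opNNNorm_le_rpow {t : ℝ} (ht : 1 ≤ t) {Q P : Matrix m n ℝ}
    (h : ∀ i j, 0 ≤ Q i j ∧ 0 ≤ P i j ∧ Q i j ≤ P i j ^ t) : ‖Q‖₊ ≤ ‖P‖₊ ^ t := by
  rw [linfty_opNNNorm_def, linfty_opNNNorm_def]
  refine Finset.sup_le fun i _ => ?_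
  have hentry (j : n) : ‖Q i j‖₊ ≤ ‖P i j‖₊ ^ t := by
    obtain ⟨hQ, hP, hQP⟩ := h i j
    rw [← NNReal.coe_le_coe, NNReal.coe_rpow, coe_nnnorm, coe_nnnorm, Real.norm_of_nonneg hQ,
      Real.norm_of_nonneg hP]
    exact hQP
  calc ∑ j, ‖Q i j‖₊ ≤ ∑ j, ‖P i j‖₊ ^ t := sum_le_sum fun j _ => hentry j
    _ ≤ (∑ j, ‖P i j‖₊) ^ t := NNReal.sum_rpow_le_rpow_sum _ _ ht
    _ ≤ (univ.sup fun i => ∑ j, ‖P i j‖₊) ^ t :=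
        NNReal.rpow_le_rpow (le_sup (f := fun i => ∑ j, ‖P i j‖₊) (mem_univ i)) (by linarith)

end LinftyOpNorm

end Matrix

section

attribute [local instance] Matrix.linftyOpNormedRing Matrix.linftyOpNormedAlgebra

theorem specRad_le_rpow_of_mem_rpowDominatedPairs {n : ℕ} {t : ℝ} (ht : 1 ≤ t)
    {Q P : Matrix (Fin n) (Fin n) ℝ} (h : (Q, P) ∈ Matrix.rpowDominatedPairs (Fin n) t ht) :
    specRad Q ≤ specRad P ^ t := by
  refine spectralRadius_le_rpow_of_nnnorm_pow_le (by linarith) fun k => ?_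
  rw [← Matrix.map_pow, ← Matrix.map_pow,
    Matrix.linfty_opNNNorm_map_of_nnnorm_eq (f := algebraMap ℝ ℂ) Complex.nnnorm_real,
    Matrix.linfty_opNNNorm_map_of_nnnorm_eq (f := algebraMap ℝ ℂ) Complex.nnnorm_real]
  exact Matrix.linfty_opNNNorm_le_rpow ht (Submonoid.pow_mem _ h k)

end

theorem stmt4 {n m : ℕ} (K : Fin m → Matrix (Fin n) (Fin n) ℝ)
    (hK : ∀ t i j, 0 ≤ K t i j) (t : ℝ) (ht : 1 ≤ t) :
    specRad ((List.ofFn fun s => Matrix.of fun i j => (K s i j) ^ t).prod) ≤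
      specRad ((List.ofFn K).prod) ^ t := by
  have hK' : ∀ A ∈ List.ofFn K, ∀ i j, 0 ≤ A i j := by
    rintro _ hA
    obtain ⟨s, rfl⟩ := List.mem_ofFn.mp hA
    exact hK s
  have h := Matrix.list_prod_rpow_mem_rpowDominatedPairs ht _ hK'
  rw [List.map_ofFn] at h
  exact specRad_le_rpow_of_mem_rpowDominatedPairs ht h
end

section
/- Let K₁,…,K_m be nonnegative n×n matrices and α ∈ [0,1]. Then r(S_α(K₁) + ⋯ + S_α(K_m)) ≤ r(S_α(K₁ + ⋯ + K_m)) ≤ r(K₁ + ⋯ + K_m), where S_α(K) has entries K(i,j)^α K(j,i)^{1−α}. -/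
open scoped ENNReal
open Finset
/-!
Both inequalities compare nonnegative matrices through Gelfand's formula
`r(A) = lim ‖A ^ N‖ ^ (1 / N)`, taken with the Frobenius norm, which is monotone in the entries
of a nonnegative matrix and invariant under transposition.

The entrywise Hölder inequality `∑ f^α g^(1-α) ≤ (∑ f)^α (∑ g)^(1-α)` gives
`∑ₜ S_α(Kₜ) ≤ S_α(∑ₜ Kₜ)` entrywise, hence the first inequality. Applied to matrix products it
also gives `S_α(M) ^ N ≤ S_α(M ^ N)` entrywise, while weighted AM-GM gives
`S_α(X) ≤ α X + (1 - α) Xᵀ`, a matrix of Frobenius norm at most `‖X‖`. Thus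
`‖S_α(M) ^ N‖ ≤ ‖M ^ N‖` for all `N`, which yields the second inequality.
-/

open Filter Topology
open scoped Matrix.Norms.Frobenius

lemma Real.sum_rpow_mul_rpow_one_sub_le {ι : Type*} (s : Finset ι) {f g : ι → ℝ}
    (hf : ∀ i ∈ s, 0 ≤ f i) (hg : ∀ i ∈ s, 0 ≤ g i) {α : ℝ} (hα : α ∈ Set.Icc (0 : ℝ) 1) :
    ∑ i ∈ s, f i ^ α * g i ^ (1 - α) ≤ (∑ i ∈ s, f i) ^ α * (∑ i ∈ s, g i) ^ (1 - α) := by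
  obtain ⟨hα₀, hα₁⟩ := hα
  rcases hα₀.eq_or_lt with rfl | hα₀
  · simp
  rcases hα₁.eq_or_lt with rfl | hα₁
  · simp
  have hpq : Real.HolderConjugate α⁻¹ (1 - α)⁻¹ :=
    (Real.holderConjugate_iff).2 ⟨(one_lt_inv₀ hα₀).2 hα₁, by rw [inv_inv, inv_inv]; ring⟩
  have H := Real.inner_le_Lp_mul_Lq_of_nonneg s hpq
    (fun i hi => Real.rpow_nonneg (hf i hi) α) (fun i hi => Real.rpow_nonneg (hg i hi) (1 - α))
  have hf' : ∀ i ∈ s, (f i ^ α) ^ α⁻¹ = f i := fun i hi => by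
    rw [← Real.rpow_mul (hf i hi), mul_inv_cancel₀ hα₀.ne', Real.rpow_one]
  have hg' : ∀ i ∈ s, (g i ^ (1 - α)) ^ (1 - α)⁻¹ = g i := fun i hi => by
    rw [← Real.rpow_mul (hg i hi), mul_inv_cancel₀ (sub_pos.2 hα₁).ne', Real.rpow_one]
  rwa [sum_congr rfl hf', sum_congr rfl hg', one_div, one_div, inv_inv, inv_inv] at H

namespace Matrix

variable {n : Type*} {α : ℝ}

lemma mul_apply_le_mul_apply [Fintype n] {A A' B B' : Matrix n n ℝ}
    (hA : ∀ i j, A i j ≤ A' i j) (hB : ∀ i j, B i j ≤ B' i j)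
    (hB₀ : ∀ i j, 0 ≤ B i j) (hA'₀ : ∀ i j, 0 ≤ A' i j) (i j : n) :
    (A * B) i j ≤ (A' * B') i j :=
  sum_le_sum fun k _ => mul_le_mul (hA i k) (hB k j) (hB₀ k j) (hA'₀ i k)

lemma pow_apply_le_pow_apply [Fintype n] [DecidableEq n] {A B : Matrix n n ℝ}
    (hA : ∀ i j, 0 ≤ A i j) (hAB : ∀ i j, A i j ≤ B i j) (N : ℕ) :
    ∀ i j, (A ^ N) i j ≤ (B ^ N) i j := by
  induction N with
  | zero => exact fun _ _ => le_rfl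
  | succ N ih =>
    simp only [pow_succ]
    exact mul_apply_le_mul_apply ih hAB hA
      (pow_apply_nonneg (fun i j => (hA i j).trans (hAB i j)) N)

lemma frobenius_norm_le_of_apply_le [Fintype n] {A B : Matrix n n ℝ}
    (hA : ∀ i j, 0 ≤ A i j) (hAB : ∀ i j, A i j ≤ B i j) : ‖A‖ ≤ ‖B‖ := by
  simp only [frobenius_norm_def, Real.norm_eq_abs]
  gcongr with i _ j _
  exacts [hA i j, hAB i j]

noncomputable def geomSymm (α : ℝ) (K : Matrix n n ℝ) : Matrix n n ℝ :=
  of fun i j => K i j ^ α * K j i ^ (1 - α)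

lemma geomSymm_apply (K : Matrix n n ℝ) (i j : n) :
    geomSymm α K i j = K i j ^ α * K j i ^ (1 - α) :=
  rfl

lemma geomSymm_apply_nonneg {K : Matrix n n ℝ} (hK : ∀ i j, 0 ≤ K i j) (i j : n) :
    0 ≤ geomSymm α K i j :=
  mul_nonneg (Real.rpow_nonneg (hK i j) α) (Real.rpow_nonneg (hK j i) (1 - α))

lemma sum_geomSymm_apply_le {ι : Type*} (s : Finset ι) {K : ι → Matrix n n ℝ}
    (hK : ∀ t ∈ s, ∀ i j, 0 ≤ K t i j) (hα : α ∈ Set.Icc (0 : ℝ) 1) (i j : n) :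
    (∑ t ∈ s, geomSymm α (K t)) i j ≤ geomSymm α (∑ t ∈ s, K t) i j := by
  simp only [Matrix.sum_apply, geomSymm_apply]
  exact Real.sum_rpow_mul_rpow_one_sub_le s (fun t ht => hK t ht i j) (fun t ht => hK t ht j i) hα

lemma geomSymm_mul_apply_le [Fintype n] {A B : Matrix n n ℝ} (hA : ∀ i j, 0 ≤ A i j)
    (hB : ∀ i j, 0 ≤ B i j) (hα : α ∈ Set.Icc (0 : ℝ) 1) (hAB : Commute A B) (i j : n) :
    (geomSymm α A * geomSymm α B) i j ≤ geomSymm α (A * B) i j :=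
  calc (geomSymm α A * geomSymm α B) i j
      = ∑ k, (A i k * B k j) ^ α * (B j k * A k i) ^ (1 - α) := by
        rw [mul_apply]
        refine sum_congr rfl fun k _ => ?_
        rw [geomSymm_apply, geomSymm_apply, Real.mul_rpow (hA i k) (hB k j),
          Real.mul_rpow (hB j k) (hA k i)]
        ring
    _ ≤ (∑ k, A i k * B k j) ^ α * (∑ k, B j k * A k i) ^ (1 - α) :=
        Real.sum_rpow_mul_rpow_one_sub_le _ (fun k _ => mul_nonneg (hA i k) (hB k j))
          (fun k _ => mul_nonneg (hB j k) (hA k i)) hα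
    _ = geomSymm α (A * B) i j := by rw [geomSymm_apply, ← mul_apply, ← mul_apply, hAB.eq]

lemma geomSymm_pow_apply_le [Fintype n] [DecidableEq n] {M : Matrix n n ℝ} (hM : ∀ i j, 0 ≤ M i j)
    (hα : α ∈ Set.Icc (0 : ℝ) 1) (N : ℕ) :
    ∀ i j, (geomSymm α M ^ N) i j ≤ geomSymm α (M ^ N) i j := by
  induction N with
  | zero =>
    intro i j
    rcases eq_or_ne i j with rfl | hij
    · simp [geomSymm_apply]
    · simpa [one_apply_ne hij] using geomSymm_apply_nonneg (α := α) (pow_apply_nonneg hM 0) i j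
  | succ N ih =>
    intro i j
    rw [pow_succ', pow_succ']
    exact (mul_apply_le_mul_apply (fun _ _ => le_rfl) ih
      (pow_apply_nonneg (geomSymm_apply_nonneg hM) N) (geomSymm_apply_nonneg hM) i j).trans
      (geomSymm_mul_apply_le hM (pow_apply_nonneg hM N) hα (Commute.self_pow M N) i j)

lemma geomSymm_apply_le {K : Matrix n n ℝ} (hK : ∀ i j, 0 ≤ K i j)
    (hα : α ∈ Set.Icc (0 : ℝ) 1) (i j : n) :
    geomSymm α K i j ≤ (α • K + (1 - α) • Kᵀ) i j :=
  Real.geom_mean_le_arith_mean2_weighted hα.1 (sub_nonneg.2 hα.2) (hK i j) (hK j i)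
    (add_sub_cancel α 1)

lemma norm_geomSymm_le [Fintype n] {K : Matrix n n ℝ} (hK : ∀ i j, 0 ≤ K i j)
    (hα : α ∈ Set.Icc (0 : ℝ) 1) : ‖geomSymm α K‖ ≤ ‖K‖ :=
  calc ‖geomSymm α K‖ ≤ ‖α • K + (1 - α) • Kᵀ‖ :=
        frobenius_norm_le_of_apply_le (geomSymm_apply_nonneg hK) (geomSymm_apply_le hK hα)
    _ ≤ α * ‖K‖ + (1 - α) * ‖Kᵀ‖ := by
        refine (norm_add_le _ _).trans_eq ?_
        rw [norm_smul, norm_smul, Real.norm_of_nonneg hα.1, Real.norm_of_nonneg (sub_nonneg.2 hα.2)]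
    _ = ‖K‖ := by rw [frobenius_norm_transpose]; ring

end Matrix

open Matrix

lemma tendsto_nnnorm_pow_one_div_specRad {n : ℕ} (A : Matrix (Fin n) (Fin n) ℝ) :
    Tendsto (fun N : ℕ => (‖A ^ N‖₊ : ℝ≥0∞) ^ (1 / N : ℝ)) atTop (𝓝 (specRad A)) := by
  have hmap (N : ℕ) : ‖(A.map (algebraMap ℝ ℂ)) ^ N‖₊ = ‖A ^ N‖₊ := by
    rw [← Matrix.map_pow, frobenius_nnnorm_map_eq]
    simp
  unfold specRad
  simpa only [hmap] using
    spectrum.pow_nnnorm_pow_one_div_tendsto_nhds_spectralRadius (A.map (algebraMap ℝ ℂ))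

lemma specRad_le_of_norm_pow_le {n : ℕ} {A B : Matrix (Fin n) (Fin n) ℝ}
    (h : ∀ N : ℕ, ‖A ^ N‖ ≤ ‖B ^ N‖) : specRad A ≤ specRad B :=
  le_of_tendsto_of_tendsto' (tendsto_nnnorm_pow_one_div_specRad A)
    (tendsto_nnnorm_pow_one_div_specRad B) fun N => by
      gcongr
      exact_mod_cast h N

lemma specRad_mono {n : ℕ} {A B : Matrix (Fin n) (Fin n) ℝ} (hA : ∀ i j, 0 ≤ A i j)
    (hAB : ∀ i j, A i j ≤ B i j) : specRad A ≤ specRad B :=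
  specRad_le_of_norm_pow_le fun N => frobenius_norm_le_of_apply_le (pow_apply_nonneg hA N)
    (pow_apply_le_pow_apply hA hAB N)

lemma specRad_geomSymm_le {n : ℕ} {M : Matrix (Fin n) (Fin n) ℝ} {α : ℝ}
    (hM : ∀ i j, 0 ≤ M i j) (hα : α ∈ Set.Icc (0 : ℝ) 1) : specRad (geomSymm α M) ≤ specRad M :=
  specRad_le_of_norm_pow_le fun N =>
    (frobenius_norm_le_of_apply_le (pow_apply_nonneg (geomSymm_apply_nonneg hM) N)
      (geomSymm_pow_apply_le hM hα N)).trans (norm_geomSymm_le (pow_apply_nonneg hM N) hα)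

theorem stmt11 {n m : ℕ} (K : Fin m → Matrix (Fin n) (Fin n) ℝ)
    (hK : ∀ t i j, 0 ≤ K t i j) (α : ℝ) (hα : α ∈ Set.Icc (0:ℝ) 1) :
    specRad (∑ t, Matrix.of fun i j => (K t i j) ^ α * (K t j i) ^ (1 - α)) ≤
        specRad (Matrix.of fun i j => ((∑ t, K t) i j) ^ α * ((∑ t, K t) j i) ^ (1 - α)) ∧
      specRad (Matrix.of fun i j => ((∑ t, K t) i j) ^ α * ((∑ t, K t) j i) ^ (1 - α)) ≤
        specRad (∑ t, K t) := by
  have hsum : ∀ i j, 0 ≤ (∑ t, K t) i j := fun i j => by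
    rw [Matrix.sum_apply]
    exact sum_nonneg fun t _ => hK t i j
  have hsum_geomSymm : ∀ i j, 0 ≤ (∑ t, geomSymm α (K t)) i j := fun i j => by
    rw [Matrix.sum_apply]
    exact sum_nonneg fun t _ => geomSymm_apply_nonneg (hK t) i j
  exact ⟨specRad_mono hsum_geomSymm (sum_geomSymm_apply_le univ (fun t _ => hK t) hα),
    specRad_geomSymm_le hsum hα⟩
end

section
/- Let K₁,…,K_m be nonnegative n×n matrices and α₁,…,α_m positive reals with ∑α_t = 1. Then for any p ∈ ℕ, (K₁^(α₁) ∘ ⋯ ∘ K_m^(α_m))^p ≤ (K₁^p)^(α₁) ∘ ⋯ ∘ (K_m^p)^(α_m) entrywise, where the left side is the p-th ordinary matrix power of the Hadamard weighted geometric mean. -/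
open scoped ENNReal
open Finset
/-- Generalized Hölder inequality for finitely many functions. -/
lemma holder_aux {ι κ : Type*} (s : Finset ι) (u : Finset κ) (f : κ → ι → ℝ)
    (hf : ∀ t k, 0 ≤ f t k) (α : κ → ℝ) (hα : ∀ t, 0 < α t)
    (hsum : ∑ t ∈ u, α t = 1) :
    ∑ k ∈ s, ∏ t ∈ u, (f t k) ^ (α t) ≤ ∏ t ∈ u, (∑ k ∈ s, f t k) ^ (α t) := by
  set S : κ → ℝ := fun t => ∑ k ∈ s, f t k with hS
  by_cases hz : ∃ t ∈ u, S t = 0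
  · obtain ⟨t₀, ht₀u, ht₀⟩ := hz
    have hf0 : ∀ k ∈ s, f t₀ k = 0 := by
      intro k hk
      have := (Finset.sum_eq_zero_iff_of_nonneg (fun k _ => hf t₀ k)).mp ht₀
      exact this k hk
    have hL : ∑ k ∈ s, ∏ t ∈ u, (f t k) ^ (α t) = 0 := by
      apply Finset.sum_eq_zero
      intro k hk
      apply Finset.prod_eq_zero ht₀u
      rw [hf0 k hk, Real.zero_rpow (ne_of_gt (hα t₀))]
    rw [hL]
    exact Finset.prod_nonneg fun t _ => Real.rpow_nonneg
      (Finset.sum_nonneg fun k _ => hf t k) _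
  · push_neg at hz
    have hSpos : ∀ t ∈ u, 0 < S t := fun t ht =>
      lt_of_le_of_ne (Finset.sum_nonneg fun k _ => hf t k) (Ne.symm (hz t ht))
    have key : ∀ k ∈ s, ∏ t ∈ u, (f t k) ^ (α t) ≤
        (∏ t ∈ u, (S t) ^ (α t)) * ∑ t ∈ u, α t * (f t k / S t) := by
      intro k _
      have h1 : ∏ t ∈ u, (f t k) ^ (α t)
          = (∏ t ∈ u, (S t) ^ (α t)) * ∏ t ∈ u, (f t k / S t) ^ (α t) := by
        rw [← Finset.prod_mul_distrib]
        apply Finset.prod_congr rfl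
        intro t ht
        rw [← Real.mul_rpow (le_of_lt (hSpos t ht))
          (div_nonneg (hf t k) (le_of_lt (hSpos t ht)))]
        rw [mul_div_cancel₀ _ (ne_of_gt (hSpos t ht))]
      rw [h1]
      apply mul_le_mul_of_nonneg_left _
        (Finset.prod_nonneg fun t ht => Real.rpow_nonneg (le_of_lt (hSpos t ht)) _)
      exact Real.geom_mean_le_arith_mean_weighted u α _
        (fun t _ => le_of_lt (hα t)) hsum
        (fun t ht => div_nonneg (hf t k) (le_of_lt (hSpos t ht)))
    calc ∑ k ∈ s, ∏ t ∈ u, (f t k) ^ (α t)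
        ≤ ∑ k ∈ s, (∏ t ∈ u, (S t) ^ (α t)) * ∑ t ∈ u, α t * (f t k / S t) :=
          Finset.sum_le_sum key
      _ = (∏ t ∈ u, (S t) ^ (α t)) * ∑ k ∈ s, ∑ t ∈ u, α t * (f t k / S t) := by
          rw [Finset.mul_sum]
      _ = (∏ t ∈ u, (S t) ^ (α t)) * ∑ t ∈ u, α t * (S t / S t) := by
          rw [Finset.sum_comm]
          congr 1
          apply Finset.sum_congr rfl
          intro t _
          rw [← Finset.mul_sum, ← Finset.sum_div]
      _ = ∏ t ∈ u, (S t) ^ (α t) := by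
          have : ∑ t ∈ u, α t * (S t / S t) = 1 := by
            rw [← hsum]
            apply Finset.sum_congr rfl
            intro t ht
            rw [div_self (ne_of_gt (hSpos t ht)), mul_one]
          rw [this, mul_one]

theorem stmt16 {n m : ℕ} (K : Fin m → Matrix (Fin n) (Fin n) ℝ)
    (hK : ∀ t i j, 0 ≤ K t i j) (α : Fin m → ℝ) (hα : ∀ t, 0 < α t)
    (hsum : ∑ t, α t = 1) (p : ℕ) :
    ∀ i j, ((Matrix.of fun i j => ∏ t, (K t i j) ^ (α t)) ^ p) i j ≤
      ∏ t, ((K t ^ p) i j) ^ (α t) := by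
  have hm : 0 < m := by
    by_contra h
    push_neg at h
    interval_cases m
    simp at hsum
  have hKpow : ∀ (t : Fin m) (q : ℕ) i j, 0 ≤ (K t ^ q) i j := by
    intro t q
    induction q with
    | zero => intro i j; by_cases h : i = j <;> simp [h, Matrix.one_apply]
    | succ q ih =>
      intro i j
      rw [pow_succ, Matrix.mul_apply]
      exact Finset.sum_nonneg fun k _ => mul_nonneg (ih i k) (hK t k j)
  induction p with
  | zero =>
    intro i j
    by_cases h : i = j
    · subst h
      simp [Matrix.one_apply, Real.one_rpow]
    · simp only [pow_zero, Matrix.one_apply_ne h]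
      have h0 : ∏ t : Fin m, (0:ℝ) ^ α t = 0 :=
        Finset.prod_eq_zero (Finset.mem_univ (⟨0, hm⟩ : Fin m))
          (Real.zero_rpow (ne_of_gt (hα _)))
      rw [h0]
  | succ p ih =>
    intro i j
    rw [pow_succ, Matrix.mul_apply]
    have step1 : ∀ k, ((Matrix.of fun i j => ∏ t, (K t i j) ^ (α t)) ^ p) i k *
        (Matrix.of fun i j => ∏ t, (K t i j) ^ (α t)) k j ≤
        ∏ t, ((K t ^ p) i k * K t k j) ^ (α t) := by
      intro k
      have h2 : (Matrix.of fun i j => ∏ t, (K t i j) ^ (α t)) k j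
          = ∏ t, (K t k j) ^ (α t) := rfl
      rw [h2]
      calc ((Matrix.of fun i j => ∏ t, (K t i j) ^ (α t)) ^ p) i k *
            ∏ t, (K t k j) ^ (α t)
          ≤ (∏ t, ((K t ^ p) i k) ^ (α t)) * ∏ t, (K t k j) ^ (α t) := by
            apply mul_le_mul_of_nonneg_right (ih i k)
            exact Finset.prod_nonneg fun t _ => Real.rpow_nonneg (hK t k j) _
        _ = ∏ t, ((K t ^ p) i k * K t k j) ^ (α t) := by
            rw [← Finset.prod_mul_distrib]
            apply Finset.prod_congr rfl
            intro t _
            rw [Real.mul_rpow (hKpow t p i k) (hK t k j)]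
    calc ∑ k, ((Matrix.of fun i j => ∏ t, (K t i j) ^ (α t)) ^ p) i k *
          (Matrix.of fun i j => ∏ t, (K t i j) ^ (α t)) k j
        ≤ ∑ k, ∏ t, ((K t ^ p) i k * K t k j) ^ (α t) :=
          Finset.sum_le_sum fun k _ => step1 k
      _ ≤ ∏ t, (∑ k, (K t ^ p) i k * K t k j) ^ (α t) :=
          holder_aux Finset.univ Finset.univ
            (fun t k => (K t ^ p) i k * K t k j)
            (fun t k => mul_nonneg (hKpow t p i k) (hK t k j)) α hα hsum
      _ = ∏ t, ((K t ^ (p + 1)) i j) ^ (α t) := by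
          apply Finset.prod_congr rfl
          intro t _
          rw [pow_succ, Matrix.mul_apply]
end
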